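/- Let P be a reversible stochastic matrix with Perron vector π and let Γ = {γ_{ij}} be a choice of one directed path γ_{ij} from i to j in G_P for each ordered pair of distinct nodes. Define the P-length |γ|_P = Σ_{(u,v)∈γ} (π_u P_{uv})^{-1} and κ̃(P) = max over edges e of G_P of Σ_{(i,j): e ∈ γ_{ij}} |γ_{ij}|_P π_i π_j. Then λ_2(P) ≤ 1 − 1/κ̃(P). -/

import Mathlib

/-!
For `x` with `∑ i, π i * x i = 0`, twice the variance `∑ π_i x_i²` is
`∑_{i,j} π_i π_j (x_i - x_j)²`. Write `x_i - x_j` as a telescoping sum along `γ_ij` with its loops erased, so that every edge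
occurs once, and apply Cauchy–Schwarz with weights `π_u P_uv`: each term is at most
`|γ_ij|_P ∑_{(u,v) ∈ γ_ij} π_u P_uv (x_u - x_v)²`. Exchanging the order of summation, the edge
`(u,v)` collects exactly its congestion, which is at most `κ̃`, so the variance is at most `κ̃`
times the Dirichlet form. For an eigenvector with eigenvalue `λ` the Dirichlet form is `1 - λ`
times the variance, and eigenvectors orthogonal to the constants exist once `n ≥ 2` because
`diag(√π) P diag(√π)⁻¹` is symmetric.
-/

open Finset Matrix

def IsStochastic {n : ℕ} (P : Matrix (Fin n) (Fin n) ℝ) : Prop :=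
  (∀ i j, 0 ≤ P i j) ∧ ∀ i, ∑ j, P i j = 1

def IsIrreducibleM {n : ℕ} (P : Matrix (Fin n) (Fin n) ℝ) : Prop :=
  ∀ i j, ∃ k : ℕ, 0 < (P ^ k) i j

def IsReversible {n : ℕ} (π : Fin n → ℝ) (P : Matrix (Fin n) (Fin n) ℝ) : Prop :=
  ∀ i j, π i * P i j = π j * P j i

/-- A list of vertices is a directed path from `i` to `j` in the graph of `P`. -/
def IsPathFrom {n : ℕ} (P : Matrix (Fin n) (Fin n) ℝ) (i j : Fin n)
    (l : List (Fin n)) : Prop :=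
  l.head? = some i ∧ l.getLast? = some j ∧ 2 ≤ l.length ∧
    ∀ e ∈ l.zip l.tail, 0 < P e.1 e.2

/-- The `P`-length of a path: `|γ|_P = ∑_{(u,v) ∈ γ} (π_u P_{uv})⁻¹`. -/
noncomputable def plen {n : ℕ} (π : Fin n → ℝ) (P : Matrix (Fin n) (Fin n) ℝ)
    (l : List (Fin n)) : ℝ :=
  ((l.zip l.tail).map (fun e => (π e.1 * P e.1 e.2)⁻¹)).sum

/-- The second largest eigenvalue: the supremum of eigenvalues admitting an
eigenvector `π`-orthogonal to the all-ones vector. -/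
noncomputable def lambda2 {n : ℕ} (π : Fin n → ℝ) (P : Matrix (Fin n) (Fin n) ℝ) : ℝ :=
  sSup {l : ℝ | ∃ x : Fin n → ℝ, x ≠ 0 ∧ (∑ i, π i * x i) = 0 ∧ P.mulVec x = l • x}

namespace List

variable {α : Type*}

theorem sublist_zip_tail_append (u v : List α) :
    (v.zip v.tail).Sublist ((u ++ v).zip (u ++ v).tail) := by
  induction u with
  | nil => exact Sublist.refl _
  | cons c u ih =>
    rcases h : u ++ v with _ | ⟨d, w⟩
    · simp_all
    · rw [h] at ih
      rw [cons_append, h]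
      exact ih.cons _

theorem nodup_zip_tail {l : List α} (hl : l.Nodup) : (l.zip l.tail).Nodup := by
  induction l with
  | nil => simp
  | cons a t ih =>
    rw [nodup_cons] at hl
    rcases t with _ | ⟨b, t⟩
    · simp
    · exact nodup_cons.2 ⟨fun h => hl.1 (of_mem_zip h).1, ih hl.2⟩

theorem sum_map_sub_zip_tail {β : Type*} [AddCommGroup β] (f : α → β) :
    ∀ {l : List α} {i j : α}, l.head? = some i → l.getLast? = some j →
      ((l.zip l.tail).map fun e => f e.1 - f e.2).sum = f i - f j
  | [a], i, j, hi, hj => by simp_all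
  | a :: b :: t, i, j, hi, hj => by
    simp only [head?_cons, Option.some.injEq, getLast?_cons_cons] at hi hj
    have ih := sum_map_sub_zip_tail f (l := b :: t) rfl hj
    simp only [tail_cons, zip_cons_cons, map_cons, sum_cons] at ih ⊢
    rw [ih, ← hi]
    abel

theorem exists_nodup_zip_tail_sublist :
    ∀ l : List α, ∃ m : List α, m.Nodup ∧ m.head? = l.head? ∧ m.getLast? = l.getLast? ∧
      (m.zip m.tail).Sublist (l.zip l.tail)
  | [] => ⟨[], by simp⟩
  | [a] => ⟨[a], by simp⟩
  | a :: b :: t => by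
    obtain ⟨m, hnd, hb, hlast, hsub⟩ := exists_nodup_zip_tail_sublist (b :: t)
    by_cases ha : a ∈ m
    · obtain ⟨m₁, m₂, rfl⟩ := append_of_mem ha
      refine ⟨a :: m₂, hnd.sublist (sublist_append_right _ _), rfl, ?_, ?_⟩
      · rw [getLast?_cons_cons, ← hlast, getLast?_append_cons]
      · exact ((sublist_zip_tail_append m₁ (a :: m₂)).trans hsub).cons _
    · obtain ⟨m', rfl⟩ : ∃ m', m = b :: m' := by
        rcases m with _ | ⟨c, m'⟩ <;> simp_all
      exact ⟨a :: b :: m', nodup_cons.2 ⟨ha, hnd⟩, rfl, by simpa using hlast,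
        hsub.cons_cons _⟩

end List

theorem sq_sub_le_sum_inv_mul_sum {α : Type*} [DecidableEq α] (Q : α × α → ℝ) (f : α → ℝ)
    {l : List α} {i j : α} (hi : l.head? = some i) (hj : l.getLast? = some j)
    (hQ : ∀ e ∈ l.zip l.tail, 0 < Q e) :
    (f i - f j) ^ 2 ≤ ((l.zip l.tail).map fun e => (Q e)⁻¹).sum *
      ∑ e ∈ (l.zip l.tail).toFinset, Q e * (f e.1 - f e.2) ^ 2 := by
  obtain ⟨m, hnd, hmi, hmj, hsub⟩ := l.exists_nodup_zip_tail_sublist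
  rw [hi] at hmi
  rw [hj] at hmj
  have hnd' := List.nodup_zip_tail hnd
  set t := (m.zip m.tail).toFinset
  have hQt : ∀ e ∈ t, 0 < Q e := fun e he => hQ e (hsub.subset (List.mem_toFinset.1 he))
  calc (f i - f j) ^ 2 = (∑ e ∈ t, (f e.1 - f e.2)) ^ 2 := by
        rw [List.sum_toFinset _ hnd', List.sum_map_sub_zip_tail f hmi hmj]
    _ ≤ (∑ e ∈ t, (Q e)⁻¹) * ∑ e ∈ t, Q e * (f e.1 - f e.2) ^ 2 :=
        sum_sq_le_sum_mul_sum_of_sq_le_mul t (fun e he => (inv_pos.2 (hQt e he)).le)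
          (fun e he => mul_nonneg (hQt e he).le (sq_nonneg _))
          (fun e he => (inv_mul_cancel_left₀ (hQt e he).ne' _).ge)
    _ ≤ _ := by
        have hinv : ∀ r ∈ (l.zip l.tail).map fun e => (Q e)⁻¹, 0 ≤ r := fun r hr => by
          obtain ⟨e, he, rfl⟩ := List.mem_map.1 hr
          exact (inv_pos.2 (hQ e he)).le
        refine mul_le_mul ?_ ?_ (sum_nonneg fun e he => mul_nonneg (hQt e he).le (sq_nonneg _))
          (List.sum_nonneg hinv)
        · rw [List.sum_toFinset _ hnd']
          exact (hsub.map _).sum_le_sum hinv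
        · exact sum_le_sum_of_subset_of_nonneg
            (fun e he => List.mem_toFinset.2 (hsub.subset (List.mem_toFinset.1 he)))
            fun e he _ => mul_nonneg (hQ e (List.mem_toFinset.1 he)).le (sq_nonneg _)

theorem sum_sum_mul_mul_sub_sq {ι : Type*} [Fintype ι] (π x : ι → ℝ) :
    ∑ i, ∑ j, π i * π j * (x i - x j) ^ 2 =
      2 * (∑ i, π i) * ∑ i, π i * x i ^ 2 - 2 * (∑ i, π i * x i) ^ 2 := by
  have expand : ∀ i j, π i * π j * (x i - x j) ^ 2 =
      π i * x i ^ 2 * π j + π i * (π j * x j ^ 2) - 2 * (π i * x i * (π j * x j)) :=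
    fun i j => by ring
  simp_rw [expand, sum_sub_distrib, sum_add_distrib, ← mul_sum, ← sum_mul]
  ring

theorem IsReversible.sum_mul_apply_eq {n : ℕ} {π : Fin n → ℝ} {P : Matrix (Fin n) (Fin n) ℝ}
    (hrev : IsReversible π P) (hrow : ∀ i, ∑ j, P i j = 1) (j : Fin n) :
    ∑ i, π i * P i j = π j := by
  simp_rw [hrev _ j, ← mul_sum, hrow, mul_one]

theorem IsReversible.sum_sum_mul_sub_sq {n : ℕ} {π : Fin n → ℝ} {P : Matrix (Fin n) (Fin n) ℝ}
    (hrev : IsReversible π P) (hrow : ∀ i, ∑ j, P i j = 1) (x : Fin n → ℝ) :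
    ∑ u, ∑ v, π u * P u v * (x u - x v) ^ 2 = 2 * ∑ u, π u * x u * (x u - (P *ᵥ x) u) := by
  have expand : ∀ u v, π u * P u v * (x u - x v) ^ 2 =
      π u * x u ^ 2 * P u v + x v ^ 2 * (π u * P u v) - 2 * (π u * x u) * (P u v * x v) :=
    fun u v => by ring
  have hstat : ∑ u, ∑ v, x v ^ 2 * (π u * P u v) = ∑ v, π v * x v ^ 2 := by
    rw [sum_comm]
    simp_rw [← mul_sum, hrev.sum_mul_apply_eq hrow, mul_comm]
  simp_rw [expand, sum_sub_distrib, sum_add_distrib, hstat, ← mul_sum, hrow]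
  simp only [mulVec, dotProduct, mul_one]
  rw [← sum_add_distrib, ← sum_sub_distrib, mul_sum]
  exact sum_congr rfl fun u _ => by ring

theorem LinearMap.IsSymmetric.exists_eigenvector_orthogonal {E : Type*}
    [NormedAddCommGroup E] [InnerProductSpace ℝ E] [FiniteDimensional ℝ E]
    {T : E →ₗ[ℝ] E} (hT : T.IsSymmetric) {v : E} {c : ℝ} (hv : T v = c • v)
    (hE : 2 ≤ Module.finrank ℝ E) :
    ∃ y : E, y ≠ 0 ∧ inner ℝ v y = 0 ∧ ∃ μ : ℝ, T y = μ • y := by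
  set K := (ℝ ∙ v)ᗮ
  have hK : ∀ y ∈ K, T y ∈ K := fun y hy => by
    rw [Submodule.mem_orthogonal_singleton_iff_inner_right] at hy ⊢
    rw [← hT, hv, real_inner_smul_left, hy, mul_zero]
  have : Nontrivial K := by
    rw [← Module.finrank_pos_iff (R := ℝ)]
    have hsum := (ℝ ∙ v).finrank_add_finrank_orthogonal
    have hspan := finrank_span_le_card (R := ℝ) ({v} : Set E)
    simp only [Set.toFinset_singleton, card_singleton] at hspan
    change 0 < Module.finrank ℝ (ℝ ∙ v)ᗮ
    omega
  obtain ⟨⟨y, hyK⟩, hy⟩ :=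
    (hT.restrict_invariant hK).hasEigenvalue_iSup_of_finiteDimensional.exists_hasEigenvector
  have hTy := Module.End.mem_eigenspace_iff.1 hy.1
  rw [Subtype.ext_iff] at hTy
  exact ⟨y, by simpa using hy.2, (Submodule.mem_orthogonal_singleton_iff_inner_right).1 hyK, _, hTy⟩

theorem Matrix.IsHermitian.exists_eigenvector_orthogonal {ι : Type*} [Fintype ι] [DecidableEq ι]
    {S : Matrix ι ι ℝ} (hS : S.IsHermitian) {v : ι → ℝ} {c : ℝ} (hv : S *ᵥ v = c • v)
    (hι : 2 ≤ Fintype.card ι) :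
    ∃ y : ι → ℝ, y ≠ 0 ∧ v ⬝ᵥ y = 0 ∧ ∃ μ : ℝ, S *ᵥ y = μ • y := by
  obtain ⟨y, hy0, hvy, μ, hμ⟩ := (isSymmetric_toEuclideanLin_iff.2 hS).exists_eigenvector_orthogonal
    (v := WithLp.toLp 2 v) (c := c) (by simp [hv]) (by simpa using hι)
  refine ⟨WithLp.ofLp y, by simpa using hy0, ?_, μ, ?_⟩
  · simpa [EuclideanSpace.inner_eq_star_dotProduct, dotProduct_comm] using hvy
  · simpa using congrArg WithLp.ofLp hμ

theorem IsReversible.exists_eigenvector_orthogonal {n : ℕ} {π : Fin n → ℝ}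
    {P : Matrix (Fin n) (Fin n) ℝ} (hrev : IsReversible π P) (hrow : ∀ i, ∑ j, P i j = 1)
    (hπ : ∀ i, 0 < π i) (hn : 2 ≤ n) :
    ∃ (l : ℝ) (x : Fin n → ℝ), x ≠ 0 ∧ ∑ i, π i * x i = 0 ∧ P *ᵥ x = l • x := by
  set q : Fin n → ℝ := fun i => √(π i)
  have hq : ∀ i, 0 < q i := fun i => Real.sqrt_pos.2 (hπ i)
  have hqq : ∀ i, q i * q i = π i := fun i => Real.mul_self_sqrt (hπ i).le
  set S : Matrix (Fin n) (Fin n) ℝ := of fun i j => q i * P i j / q j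
  have hS : ∀ x, S *ᵥ (q * x) = q * (P *ᵥ x) := fun x => by
    ext i
    simp only [S, mulVec, dotProduct, of_apply, Pi.mul_apply, mul_sum]
    exact sum_congr rfl fun j _ => by field_simp [(hq j).ne']
  have hSherm : S.IsHermitian := by
    ext i j
    simp only [S, conjTranspose_apply, of_apply, star_trivial]
    rw [div_eq_div_iff (hq i).ne' (hq j).ne']
    linear_combination hrev j i + P j i * hqq j - P i j * hqq i
  have hSq : S *ᵥ q = (1 : ℝ) • q := by
    have h1 : P *ᵥ 1 = 1 := funext fun i => by simp [mulVec, dotProduct, hrow]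
    simpa [h1] using hS 1
  obtain ⟨y, hy0, hqy, μ, hμ⟩ := hSherm.exists_eigenvector_orthogonal hSq (by simpa using hn)
  have hy : q * (y / q) = y := funext fun i => mul_div_cancel₀ _ (hq i).ne'
  refine ⟨μ, y / q, fun h => hy0 (by rw [← hy, h, mul_zero]), ?_, ?_⟩
  · rw [← hqy]
    exact sum_congr rfl fun i _ => by rw [← hqq, mul_assoc, ← Pi.mul_apply q (y / q) i, hy]
  · ext i
    have := congrFun ((hS _).symm.trans (hy ▸ hμ)) i
    simp only [Pi.mul_apply, Pi.smul_apply, smul_eq_mul] at this ⊢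
    exact mul_left_cancel₀ (hq i).ne' (by rw [this]; ring)

noncomputable def congestion {n : ℕ} (π : Fin n → ℝ) (P : Matrix (Fin n) (Fin n) ℝ)
    (Γ : Fin n → Fin n → List (Fin n)) (u v : Fin n) : ℝ :=
  ∑ i, ∑ j, if i ≠ j ∧ (u, v) ∈ (Γ i j).zip (Γ i j).tail then plen π P (Γ i j) * π i * π j else 0

theorem mul_mul_sub_sq_le_sum_path_edges {n : ℕ} {P : Matrix (Fin n) (Fin n) ℝ}
    {π : Fin n → ℝ} (hπ : ∀ i, 0 < π i) {Γ : Fin n → Fin n → List (Fin n)}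
    (hΓ : ∀ i j, i ≠ j → IsPathFrom P i j (Γ i j)) (x : Fin n → ℝ) (i j : Fin n) :
    π i * π j * (x i - x j) ^ 2 ≤ ∑ u, ∑ v,
      (if i ≠ j ∧ (u, v) ∈ (Γ i j).zip (Γ i j).tail then plen π P (Γ i j) * π i * π j else 0) *
        (π u * P u v * (x u - x v) ^ 2) := by
  rcases eq_or_ne i j with rfl | hij
  · simp
  obtain ⟨hi, hj, -, hpos⟩ := hΓ i j hij
  set E := (Γ i j).zip (Γ i j).tail
  have hpath := sq_sub_le_sum_inv_mul_sum (fun e => π e.1 * P e.1 e.2) x hi hj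
    fun e he => mul_pos (hπ _) (hpos e he)
  have hsum : ∑ e ∈ E.toFinset, π e.1 * P e.1 e.2 * (x e.1 - x e.2) ^ 2
      = ∑ u, ∑ v, if (u, v) ∈ E then π u * P u v * (x u - x v) ^ 2 else 0 := by
    rw [← sum_product']
    simp_rw [← List.mem_toFinset]
    rw [sum_ite_mem, univ_product_univ, univ_inter]
  calc π i * π j * (x i - x j) ^ 2 ≤ π i * π j * (plen π P (Γ i j) *
        ∑ u, ∑ v, if (u, v) ∈ E then π u * P u v * (x u - x v) ^ 2 else 0) := by
        rw [← hsum]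
        exact mul_le_mul_of_nonneg_left hpath (mul_pos (hπ i) (hπ j)).le
    _ = _ := by
        simp only [mul_sum, ne_eq, hij, not_false_eq_true, true_and, ite_mul, zero_mul, mul_ite,
          mul_zero]
        ring_nf

theorem poincare_inequality_of_congestion_le {n : ℕ} {P : Matrix (Fin n) (Fin n) ℝ}
    {π : Fin n → ℝ} (hP : ∀ i j, 0 ≤ P i j) (hπ : ∀ i, 0 < π i)
    {Γ : Fin n → Fin n → List (Fin n)} (hΓ : ∀ i j, i ≠ j → IsPathFrom P i j (Γ i j))
    {κ : ℝ} (hκ : ∀ u v, 0 < P u v → congestion π P Γ u v ≤ κ) (x : Fin n → ℝ) :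
    ∑ i, ∑ j, π i * π j * (x i - x j) ^ 2 ≤ κ * ∑ u, ∑ v, π u * P u v * (x u - x v) ^ 2 := by
  set D : Fin n → Fin n → ℝ := fun u v => π u * P u v * (x u - x v) ^ 2
  calc ∑ i, ∑ j, π i * π j * (x i - x j) ^ 2
      ≤ ∑ i, ∑ j, ∑ u, ∑ v, (if i ≠ j ∧ (u, v) ∈ (Γ i j).zip (Γ i j).tail
          then plen π P (Γ i j) * π i * π j else 0) * D u v :=
        sum_le_sum fun i _ => sum_le_sum fun j _ => mul_mul_sub_sq_le_sum_path_edges hπ hΓ x i j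
    _ = ∑ u, ∑ v, congestion π P Γ u v * D u v := by
      simp only [congestion, sum_mul]
      exact (sum_congr rfl fun _ _ => sum_comm.trans (sum_congr rfl fun _ _ => sum_comm)).trans
        (sum_comm.trans (sum_congr rfl fun _ _ => sum_comm))
    _ ≤ ∑ u, ∑ v, κ * D u v := by
      refine sum_le_sum fun u _ => sum_le_sum fun v _ => ?_
      rcases (hP u v).lt_or_eq with hpos | hzero
      · exact mul_le_mul_of_nonneg_right (hκ u v hpos)
          (mul_nonneg (mul_nonneg (hπ u).le hpos.le) (sq_nonneg _))
      · simp [D, ← hzero]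
    _ = κ * ∑ u, ∑ v, D u v := by simp only [mul_sum]

theorem IsReversible.eigenvalue_le_one_sub_inv_of_congestion_le {n : ℕ}
    {P : Matrix (Fin n) (Fin n) ℝ} {π : Fin n → ℝ} (hP : IsStochastic P)
    (hπ : ∀ i, 0 < π i) (hπsum : ∑ i, π i = 1) (hrev : IsReversible π P)
    {Γ : Fin n → Fin n → List (Fin n)} (hΓ : ∀ i j, i ≠ j → IsPathFrom P i j (Γ i j))
    {κ : ℝ} (hκ : ∀ u v, 0 < P u v → congestion π P Γ u v ≤ κ) {l : ℝ} {x : Fin n → ℝ}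
    (hx : x ≠ 0) (horth : ∑ i, π i * x i = 0) (heig : P *ᵥ x = l • x) :
    l ≤ 1 - 1 / κ := by
  obtain ⟨hPnn, hrow⟩ := hP
  set V := ∑ i, π i * x i ^ 2
  have hV : 0 < V := by
    obtain ⟨i, hi⟩ := Function.ne_iff.1 hx
    exact sum_pos' (fun j _ => mul_nonneg (hπ j).le (sq_nonneg _))
      ⟨i, mem_univ _, mul_pos (hπ i) (sq_pos_of_ne_zero hi)⟩
  have hvar : ∑ i, ∑ j, π i * π j * (x i - x j) ^ 2 = 2 * V := by
    rw [sum_sum_mul_mul_sub_sq, hπsum, horth]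
    ring
  have hdir : ∑ u, ∑ v, π u * P u v * (x u - x v) ^ 2 = 2 * (1 - l) * V := by
    rw [hrev.sum_sum_mul_sub_sq hrow, heig, mul_sum, mul_sum]
    exact sum_congr rfl fun u _ => by simp only [Pi.smul_apply, smul_eq_mul]; ring
  have hpoinc := poincare_inequality_of_congestion_le hPnn hπ hΓ hκ x
  rw [hvar, hdir] at hpoinc
  have hgap : 0 ≤ 1 - l := by
    have := hdir ▸ sum_nonneg fun u _ => sum_nonneg fun v _ =>
      mul_nonneg (mul_nonneg (hπ u).le (hPnn u v)) (sq_nonneg (x u - x v))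
    nlinarith
  have hκl : 1 ≤ κ * (1 - l) := by nlinarith
  have hκpos : 0 < κ := by nlinarith
  rw [le_sub_comm, div_le_iff₀ hκpos]
  linarith

theorem diaconis_stroock_bound_general {n : ℕ} (hn : 2 ≤ n)
    (P : Matrix (Fin n) (Fin n) ℝ) (π : Fin n → ℝ)
    (hP : IsStochastic P)
    (hπpos : ∀ i, 0 < π i) (hπsum : ∑ i, π i = 1)
    (hrev : IsReversible π P)
    (Γ : Fin n → Fin n → List (Fin n))
    (hΓpath : ∀ i j, i ≠ j → IsPathFrom P i j (Γ i j))
    (κ' : ℝ)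
    (hκ' : κ' = sSup {c : ℝ | ∃ u v : Fin n, 0 < P u v ∧
      c = ∑ i : Fin n, ∑ j : Fin n,
        if i ≠ j ∧ (u, v) ∈ (Γ i j).zip (Γ i j).tail
        then plen π P (Γ i j) * π i * π j else 0}) :
    lambda2 π P ≤ 1 - 1 / κ' := by
  have hbdd : BddAbove {c : ℝ | ∃ u v : Fin n, 0 < P u v ∧ c = congestion π P Γ u v} :=
    ((Set.finite_range fun e : Fin n × Fin n => congestion π P Γ e.1 e.2).subset
      (by rintro _ ⟨u, v, -, rfl⟩; exact ⟨(u, v), rfl⟩)).bddAbove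
  have hκ : ∀ u v, 0 < P u v → congestion π P Γ u v ≤ κ' := fun u v huv =>
    hκ' ▸ le_csSup hbdd ⟨u, v, huv, rfl⟩
  obtain ⟨l, x, hx, horth, heig⟩ := hrev.exists_eigenvector_orthogonal hP.2 hπpos hn
  refine csSup_le ⟨l, x, hx, horth, heig⟩ ?_
  rintro l ⟨x, hx, horth, heig⟩
  exact hrev.eigenvalue_le_one_sub_inv_of_congestion_le hP hπpos hπsum hΓpath hκ hx horth heig

theorem diaconis_stroock_bound {n : ℕ} (hn : 2 ≤ n)
    (P : Matrix (Fin n) (Fin n) ℝ) (π : Fin n → ℝ)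
    (hP : IsStochastic P) (hirr : IsIrreducibleM P)
    (hπpos : ∀ i, 0 < π i) (hπsum : ∑ i, π i = 1)
    (hrev : IsReversible π P)
    (Γ : Fin n → Fin n → List (Fin n))
    (hΓpath : ∀ i j, i ≠ j → IsPathFrom P i j (Γ i j))
    (κ' : ℝ)
    (hκ' : κ' = sSup {c : ℝ | ∃ u v : Fin n, 0 < P u v ∧
      c = ∑ i : Fin n, ∑ j : Fin n,
        if i ≠ j ∧ (u, v) ∈ (Γ i j).zip (Γ i j).tail
        then plen π P (Γ i j) * π i * π j else 0}) :
    lambda2 π P ≤ 1 - 1 / κ' :=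
  diaconis_stroock_bound_general hn P π hP hπpos hπsum hrev Γ hΓpath κ' hκ'
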